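/- For any homogeneous polynomial P of degree m in d variables, the constant-coefficient differential operator P(∂) equals (-1)^m/m! · ad(F)^m applied to the multiplication operator by P, where F = -(1/2)(∂₁² + ⋯ + ∂_d²) and ad(F)(T) = FT - TF. -/

import Mathlib

open MvPolynomial Finset

noncomputable section

abbrev Pol (r : ℕ) : Type := MvPolynomial (Fin r) ℂ

/-- Multiplication operator by a polynomial. -/
def mulOp {r : ℕ} (p : Pol r) : Module.End ℂ (Pol r) := LinearMap.mulLeft ℂ p

/-- Partial derivative operator. -/
def pd {r : ℕ} (j : Fin r) : Module.End ℂ (Pol r) := (pderiv j).toLinearMap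

/-- The transposition operator `s_{ij}` swapping the variables `i` and `j`. -/
def swOp {r : ℕ} (i j : Fin r) : Module.End ℂ (Pol r) :=
  (rename ⇑(Equiv.swap i j) : Pol r →ₐ[ℂ] Pol r).toLinearMap

/-- The constant-coefficient differential operator `P(∂)` associated to a polynomial `P`:
substitute `∂_j` for `z_j` in each monomial. -/
def diffOp {d : ℕ} (p : Pol d) : Module.End ℂ (Pol d) :=
  ∑ c ∈ p.support, p.coeff c • ((List.finRange d).map (fun j => (pd j) ^ (c j))).prod

/-!
Write `Δ = ∑ⱼ ∂ⱼ²`, so that `ad F = -½ ad Δ`. Since `[∂ⱼ, M_P] = M_{∂ⱼP}`, we get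
`ad Δ (M_P) = ∑ⱼ (∂ⱼ M_{∂ⱼP} + M_{∂ⱼP} ∂ⱼ)`, and `ad Δ` commutes with left and right
multiplication by every `∂ⱼ`. Induction on `m` then gives `(ad Δ)^m M_P = 2^m m! P(∂)`:
the inductive step is Euler's identity `∑ⱼ zⱼ ∂ⱼP = m P`, pushed through the algebra map
`P ↦ P(∂)`.
-/

open LieAlgebra

attribute [local instance] LieRing.ofAssociativeRing

section Adjoint

variable {R A : Type*} [CommRing R] [Ring A] [Algebra R A] {a x : A}

theorem LieAlgebra.ad_pow_mul_of_commute_left (h : Commute a x) (n : ℕ) (y : A) :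
    (ad R A a ^ n) (x * y) = x * (ad R A a ^ n) y := by
  have hc : Commute (ad R A a) (LinearMap.mulLeft R x) := by
    rw [ad_eq_lmul_left_sub_lmul_right]
    exact (h.map (Algebra.lmul R A)).sub_left (LinearMap.commute_mulLeft_right x a).symm
  exact LinearMap.congr_fun (hc.pow_left n).eq y

theorem LieAlgebra.ad_pow_mul_of_commute_right (h : Commute a x) (n : ℕ) (y : A) :
    (ad R A a ^ n) (y * x) = (ad R A a ^ n) y * x := by
  have hc : Commute (ad R A a) (LinearMap.mulRight R x) := by
    rw [ad_eq_lmul_left_sub_lmul_right]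
    refine (LinearMap.commute_mulLeft_right a x).sub_left ?_
    ext y
    simp [mul_assoc, h.eq]
  exact LinearMap.congr_fun (hc.pow_left n).eq y

end Adjoint

theorem MvPolynomial.pderiv_comm {R σ : Type*} [CommRing R] (i j : σ) (p : MvPolynomial σ R) :
    pderiv i (pderiv j p) = pderiv j (pderiv i p) := by
  have : ⁅pderiv i, pderiv j⁆ = (0 : Derivation R (MvPolynomial σ R) (MvPolynomial σ R)) :=
    derivation_ext fun k => by
      classical
      rw [Derivation.commutator_apply, pderiv_X, pderiv_X]
      simp [Pi.single_apply, apply_ite]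
  simpa [Derivation.commutator_apply, sub_eq_zero] using congr($this p)

theorem Derivation.lie_mulLeft {R A : Type*} [CommRing R] [CommRing A] [Algebra R A]
    (D : Derivation R A A) (a : A) :
    ⁅(D : Module.End R A), LinearMap.mulLeft R a⁆ = LinearMap.mulLeft R (D a) := by
  refine LinearMap.ext fun b => ?_
  simp [Ring.lie_def, D.leibniz]
  ring

variable {d : ℕ}

theorem commute_pd (i j : Fin d) : Commute (pd i) (pd j) :=
  LinearMap.ext (pderiv_comm i j)

def constCoeffDiffOps (d : ℕ) : Subalgebra ℂ (Module.End ℂ (Pol d)) :=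
  Algebra.adjoin ℂ (Set.range pd)

instance : IsMulCommutative (constCoeffDiffOps d) :=
  Algebra.isMulCommutative_adjoin ℂ (by rintro _ ⟨i, rfl⟩ _ ⟨j, rfl⟩; exact commute_pd i j)

open scoped IsMulCommutative

/- `aeval` needs a commutative target, so `P(∂)` is evaluated in the commutative algebra
generated by the `∂ⱼ`. -/
def diffOpAlgHom : Pol d →ₐ[ℂ] Module.End ℂ (Pol d) :=
  (constCoeffDiffOps d).val.comp (aeval fun j => ⟨pd j, Algebra.subset_adjoin ⟨j, rfl⟩⟩)

theorem diffOpAlgHom_apply (p : Pol d) : diffOpAlgHom p = diffOp p := by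
  rw [diffOpAlgHom, AlgHom.comp_apply, aeval_def, eval₂_eq', map_sum, diffOp]
  refine sum_congr rfl fun c _ => ?_
  rw [map_mul, Fin.prod_univ_def, map_list_prod, List.map_map, Algebra.smul_def]
  rfl

theorem commute_diffOp (p q : Pol d) : Commute (diffOp p) (diffOp q) := by
  simp only [← diffOpAlgHom_apply, diffOpAlgHom, AlgHom.comp_apply]
  exact (Commute.all _ _).map (constCoeffDiffOps d).val

theorem diffOp_X (j : Fin d) : diffOp (X j : Pol d) = pd j := by
  rw [← diffOpAlgHom_apply, diffOpAlgHom, AlgHom.comp_apply, aeval_X]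
  rfl

theorem diffOp_C (a : ℂ) : diffOp (C a : Pol d) = algebraMap ℂ _ a := by
  rw [← diffOpAlgHom_apply, ← algebraMap_eq, AlgHom.commutes]

theorem commute_pd_diffOp (j : Fin d) (p : Pol d) : Commute (pd j) (diffOp p) :=
  diffOp_X j ▸ commute_diffOp _ _

theorem sum_pd_mul_diffOp_pderiv {m : ℕ} {p : Pol d} (hp : p.IsHomogeneous m) :
    ∑ j, pd j * diffOp (pderiv j p) = (m : ℂ) • diffOp p := by
  simp only [← diffOp_X, ← diffOpAlgHom_apply, ← map_mul, ← map_sum, hp.sum_X_mul_pderiv,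
    map_nsmul, Nat.cast_smul_eq_nsmul]

theorem mulOp_C (a : ℂ) : mulOp (C a : Pol d) = algebraMap ℂ _ a :=
  (Algebra.lmul ℂ (Pol d)).commutes a

def laplacian (d : ℕ) : Module.End ℂ (Pol d) := ∑ j, pd j * pd j

theorem commute_laplacian_pd (j : Fin d) : Commute (laplacian d) (pd j) :=
  Commute.sum_left _ _ _ fun i _ => (commute_pd i j).mul_left (commute_pd i j)

theorem laplacian_lie_mulOp (p : Pol d) :
    ⁅laplacian d, mulOp p⁆ = ∑ j, (pd j * mulOp (pderiv j p) + mulOp (pderiv j p) * pd j) := by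
  rw [laplacian, sum_lie]
  refine sum_congr rfl fun j _ => ?_
  have h : ⁅pd j, mulOp p⁆ = mulOp (pderiv j p) := (pderiv j).lie_mulLeft p
  rw [← h]
  simp only [Ring.lie_def, mul_sub, sub_mul, mul_assoc]
  abel

theorem ad_laplacian_pow_mulOp {m : ℕ} {p : Pol d} (hp : p.IsHomogeneous m) :
    (ad ℂ _ (laplacian d) ^ m) (mulOp p) = ((2 : ℂ) ^ m * m.factorial) • diffOp p := by
  induction m generalizing p with
  | zero =>
    obtain ⟨a, rfl⟩ : ∃ a, p = C a :=
      ⟨_, totalDegree_eq_zero_iff_eq_C.1 ((totalDegree_zero_iff_isHomogeneous _).2 hp)⟩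
    simp [mulOp_C, diffOp_C]
  | succ m ih =>
    have hterm (j : Fin d) :
        (ad ℂ _ (laplacian d) ^ m) (pd j * mulOp (pderiv j p) + mulOp (pderiv j p) * pd j) =
          ((2 : ℂ) ^ (m + 1) * m.factorial) • (pd j * diffOp (pderiv j p)) := by
      rw [map_add, ad_pow_mul_of_commute_left (commute_laplacian_pd j),
        ad_pow_mul_of_commute_right (commute_laplacian_pd j), ih (by simpa using hp.pderiv),
        mul_smul_comm, smul_mul_assoc, ← (commute_pd_diffOp j _).eq, ← add_smul]
      congr 1
      ring
    rw [pow_succ, Module.End.mul_apply, ad_apply, laplacian_lie_mulOp, map_sum,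
      sum_congr rfl fun j _ => hterm j, ← smul_sum, sum_pd_mul_diffOp_pderiv hp, smul_smul]
    congr 1
    push_cast [Nat.factorial_succ]
    ring

/-- For a homogeneous polynomial `P` of degree `m`,
`P(∂) = (-1)^m (1/m!) ad(F)^m (M_P)` where `F = -(1/2)∑ ∂ⱼ²`, `ad(F) T = F T - T F`,
and `M_P` is multiplication by `P`. -/
theorem diffOp_eq_adpow {d : ℕ} (m : ℕ) (p : Pol d) (hp : p.IsHomogeneous m) :
    letI F : Module.End ℂ (Pol d) := -((1 / 2 : ℂ) • ∑ j : Fin d, pd j * pd j)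
    diffOp p = ((-1 : ℂ) ^ m / (m.factorial : ℂ)) •
      (fun T : Module.End ℂ (Pol d) => F * T - T * F)^[m] (mulOp p) := by
  rw [show ∑ j : Fin d, pd j * pd j = laplacian d from rfl]
  have hF : (fun T => -((1 / 2 : ℂ) • laplacian d) * T - T * -((1 / 2 : ℂ) • laplacian d)) =
      ⇑(ad ℂ _ (-((1 / 2 : ℂ) • laplacian d))) :=
    funext fun T => ((ad_apply ℂ _ _ _).trans (Ring.lie_def _ _)).symm
  rw [hF, ← Module.End.coe_pow, map_neg, map_smul, ← neg_smul, smul_pow, LinearMap.smul_apply,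
    ad_laplacian_pow_mulOp hp, smul_smul, smul_smul]
  have : (m.factorial : ℂ) ≠ 0 := by exact_mod_cast m.factorial_ne_zero
  convert (one_smul ℂ (diffOp p)).symm using 2
  field_simp
  rw [← mul_pow, ← mul_pow]
  norm_num
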